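/- Let 1 ≤ p ≤ ∞, 1 ≤ q < ∞, let φ : [0,∞) → ℝ be a weight with lim_{r→∞} r·φ'(r) = ∞, let δ > 1, and set ψ(r) = φ(r/δ). Then there exists a constant C > 0 such that for every t ≥ δ and every entire function f, ‖D_t f‖_{p,q,ψ} ≤ C ‖f‖_{p,q,φ}, where D_t f(z) = f(z/t); i.e., the dilations D_t : F_φ^{p,q} → F_ψ^{p,q} are bounded uniformly in t ≥ δ. -/

import Mathlib

open MeasureTheory Set Filter
open scoped ENNReal Topology

/-- The integral mean `M_p(f,r)` over the circle of radius `r`, with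
`M_∞(f,r) = sup_{0≤θ≤2π} |f(r e^{iθ})|`. -/
noncomputable def Mp (p : ℝ≥0∞) (f : ℂ → ℂ) (r : ℝ) : ℝ :=
  if p = ⊤ then
    sSup ((fun θ : ℝ => ‖f ((r:ℂ) * Complex.exp ((θ:ℂ) * Complex.I))‖) ''
      Set.Icc 0 (2 * Real.pi))
  else
    ((1 / (2 * Real.pi)) *
        ∫ θ in (0:ℝ)..(2 * Real.pi),
          ‖f ((r:ℂ) * Complex.exp ((θ:ℂ) * Complex.I))‖ ^ p.toReal) ^
      (1 / p.toReal)

/-- The weighted mixed norm `‖f‖_{p,q,φ}` (with values in `[0,∞]`), for `1 ≤ q < ∞`. -/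
noncomputable def mixedNorm (p : ℝ≥0∞) (q : ℝ) (φ : ℝ → ℝ) (f : ℂ → ℂ) : ℝ≥0∞ :=
  (∫⁻ r in Set.Ioi (0:ℝ), ENNReal.ofReal (Mp p f r ^ q * Real.exp (-q * φ r) * r)) ^ (1 / q)

/-!
Since `M_p(f(·/t), r) = M_p(f, r/t)`, everything rests on the monotonicity of `r ↦ M_p(f, r)` for
entire `f` and `p ≥ 1`: with it, `‖f(·/t)‖_{p,q,ψ} ≤ ‖f(·/δ)‖_{p,q,ψ}` for `t ≥ δ`, and the
substitution `r = δ s` gives `‖f(·/δ)‖_{p,q,ψ}^q = δ² ‖f‖_{p,q,φ}^q`, so `C = δ^{2/q}` works.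
For `p = ∞` monotonicity is the maximum modulus principle. For finite `p`, the Poisson formula on
the circle `|z| = R` and Jensen's inequality give `|f(w)|^p ≤ ⨍ P(w, z) |f(z)|^p`; averaging over
`|w| = r < R` and exchanging the averages, the symmetry
`P(r e^{iθ}, R e^{iφ}) = P(r e^{iφ}, R e^{iθ})` turns the inner average of the kernel into `1`.
-/

open Complex Metric Real
open scoped ComplexConjugate

section CircleAverage

variable {E : Type*} [NormedAddCommGroup E] [NormedSpace ℝ E]

theorem norm_circleAverage_le_circleAverage_norm (f : ℂ → E) (c : ℂ) (R : ℝ) :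
    ‖circleAverage f c R‖ ≤ circleAverage (fun z ↦ ‖f z‖) c R := by
  rw [circleAverage, circleAverage, norm_smul, Real.norm_of_nonneg (by positivity), smul_eq_mul]
  gcongr
  exact intervalIntegral.norm_integral_le_integral_norm two_pi_pos.le

theorem circleAverage_circleAverage_swap {F : ℂ → ℂ → E} {c c' : ℂ} {r R : ℝ}
    (hF : Continuous fun x : ℝ × ℝ ↦ F (circleMap c r x.1) (circleMap c' R x.2)) :
    circleAverage (fun w ↦ circleAverage (F w) c' R) c r
      = circleAverage (fun z ↦ circleAverage (fun w ↦ F w z) c r) c' R := by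
  simp only [circleAverage, intervalIntegral.integral_smul]
  rw [intervalIntegral_intervalIntegral_swap]
  exact (hF.continuousOn.integrableOn_compact (isCompact_uIcc.prod isCompact_uIcc)).mono_set
    (prod_mono uIoc_subset_uIcc uIoc_subset_uIcc)

theorem circleIntegrable_circleAverage {F : ℂ → ℂ → E} {c c' : ℂ} {r R : ℝ}
    (hF : Continuous fun x : ℝ × ℝ ↦ F (circleMap c r x.1) (circleMap c' R x.2)) :
    CircleIntegrable (fun w ↦ circleAverage (F w) c' R) c r :=
  ((intervalIntegral.continuous_parametric_intervalIntegral_of_continuous' hF _ _).const_smul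
    _).intervalIntegrable _ _

end CircleAverage

/-- `A ^ p * ((1 - p) + p / A * x)` is the tangent line of `x ↦ x ^ p` at `A`. -/
theorem tangent_rpow_le_rpow {A x p : ℝ} (hA : 0 < A) (hx : 0 ≤ x) (hp : 1 ≤ p) :
    A ^ p * ((1 - p) + p / A * x) ≤ x ^ p := by
  have bernoulli := one_add_mul_self_le_rpow_one_add (s := x / A - 1)
    (by linarith [div_nonneg hx hA.le]) hp
  rw [add_sub_cancel, div_rpow hx hA.le, le_div_iff₀' (by positivity)] at bernoulli
  exact le_of_eq_of_le (by ring) bernoulli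

theorem rpow_circleAverage_mul_le {P g : ℂ → ℝ} {c : ℂ} {R p : ℝ} (hp : 1 ≤ p)
    (hP : ∀ z ∈ sphere c |R|, 0 ≤ P z) (hg : ∀ z ∈ sphere c |R|, 0 ≤ g z)
    (hP_avg : circleAverage P c R = 1) (hP_int : CircleIntegrable P c R)
    (hPg_int : CircleIntegrable (fun z ↦ P z * g z) c R)
    (hPgp_int : CircleIntegrable (fun z ↦ P z * g z ^ p) c R) :
    circleAverage (fun z ↦ P z * g z) c R ^ p ≤ circleAverage (fun z ↦ P z * g z ^ p) c R := by
  set A := circleAverage (fun z ↦ P z * g z) c R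
  have hA : 0 ≤ A := circleAverage_nonneg_of_nonneg fun z hz ↦ mul_nonneg (hP z hz) (hg z hz)
  rcases hA.eq_or_lt with hA | hA
  · rw [← hA, zero_rpow (by linarith)]
    exact circleAverage_nonneg_of_nonneg fun z hz ↦
      mul_nonneg (hP z hz) (rpow_nonneg (hg z hz) p)
  calc A ^ p
      = circleAverage (fun z ↦ (A ^ p * (1 - p)) • P z + (A ^ p * p / A) • (P z * g z)) c R := by
        rw [circleAverage_fun_add hP_int.const_fun_smul hPg_int.const_fun_smul,
          circleAverage_fun_smul, circleAverage_fun_smul, hP_avg, smul_eq_mul, smul_eq_mul]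
        field_simp
        ring
    _ ≤ circleAverage (fun z ↦ P z * g z ^ p) c R := by
        refine circleAverage_mono (hP_int.const_fun_smul.fun_add hPg_int.const_fun_smul)
          hPgp_int fun z hz ↦ ?_
        have := mul_le_mul_of_nonneg_left (tangent_rpow_le_rpow hA (hg z hz) hp) (hP z hz)
        simp only [smul_eq_mul]
        linear_combination this

section PoissonKernel

variable {c w z : ℂ} {R : ℝ}

theorem poissonKernel_nonneg (h : ‖w - c‖ ≤ ‖z - c‖) : 0 ≤ poissonKernel c w z :=
  div_nonneg (sub_nonneg.2 (pow_le_pow_left₀ (norm_nonneg _) h 2)) (sq_nonneg _)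

theorem continuousOn_poissonKernel_sphere (hw : w ∈ ball c R) :
    ContinuousOn (poissonKernel c w) (sphere c |R|) := by
  rw [poissonKernel_eq_re_herglotzRieszKernel]
  exact continuous_re.comp_continuousOn (continuousOn_herglotzRieszKernel_sphere hw)

theorem circleAverage_poissonKernel (hw : w ∈ ball c R) :
    circleAverage (poissonKernel c w) c R = 1 := by
  simpa [Pi.mul_def] using
    (InnerProductSpace.harmonicContOnCl_const (c := (1 : ℝ))).circleAverage_poissonKernel_smul hw

theorem continuous_poissonKernel_circleMap {r : ℝ} (hrR : |r| < |R|) :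
    Continuous fun x : ℝ × ℝ ↦ poissonKernel 0 (circleMap 0 r x.1) (circleMap 0 R x.2) := by
  simp only [poissonKernel, sub_zero]
  refine Continuous.div (by fun_prop) (by fun_prop) fun x ↦ ?_
  have := norm_sub_norm_le (circleMap 0 R x.2) (circleMap 0 r x.1)
  rw [norm_circleMap_zero, norm_circleMap_zero] at this
  exact pow_ne_zero 2 (by linarith : (0 : ℝ) < _).ne'

theorem norm_circleMap_sub_circleMap_comm (r R θ φ : ℝ) :
    ‖circleMap 0 R φ - circleMap 0 r θ‖ = ‖circleMap 0 R θ - circleMap 0 r φ‖ := by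
  have h : circleMap 0 R θ - circleMap 0 r φ
      = conj (circleMap 0 R φ - circleMap 0 r θ) * circleMap 0 1 (θ + φ) := by
    rw [map_sub, conj_circleMap_zero, conj_circleMap_zero, sub_mul, circleMap_zero_mul,
      circleMap_zero_mul, mul_one, mul_one, neg_add_cancel_comm_assoc, neg_add_cancel_left]
  rw [h, norm_mul, Complex.norm_conj, norm_circleMap_zero, abs_one, mul_one]

theorem poissonKernel_circleMap_comm (r R θ φ : ℝ) :
    poissonKernel 0 (circleMap 0 r θ) (circleMap 0 R φ)
      = poissonKernel 0 (circleMap 0 r φ) (circleMap 0 R θ) := by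
  simp only [poissonKernel, sub_zero, norm_circleMap_zero,
    norm_circleMap_sub_circleMap_comm r R θ φ]

theorem circleAverage_poissonKernel_left {r : ℝ} (hrR : |r| < |R|)
    (hz : z ∈ sphere 0 |R|) :
    circleAverage (fun w ↦ poissonKernel 0 w z) 0 r = 1 := by
  obtain ⟨φ, rfl⟩ : z ∈ range (circleMap 0 R) := by rwa [range_circleMap]
  calc circleAverage (fun w ↦ poissonKernel 0 w (circleMap 0 R φ)) 0 r
      = circleAverage (poissonKernel 0 (circleMap 0 r φ)) 0 R := by
        simp only [circleAverage, poissonKernel_circleMap_comm r R _ φ]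
    _ = 1 := by
        rw [← circleAverage_abs_radius]
        exact circleAverage_poissonKernel (by simpa [norm_circleMap_zero] using hrR)

end PoissonKernel

section Holomorphic

variable {E : Type*} [NormedAddCommGroup E] [NormedSpace ℂ E] {f : ℂ → E} {p : ℝ}

theorem Differentiable.norm_le_sSup_norm_image_sphere (hf : Differentiable ℂ f) {w : ℂ}
    {R : ℝ} (hw : ‖w‖ ≤ R) : ‖f w‖ ≤ sSup ((fun z ↦ ‖f z‖) '' sphere 0 R) := by
  have hbdd : BddAbove ((fun z ↦ ‖f z‖) '' sphere 0 R) :=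
    (isCompact_sphere 0 R).bddAbove_image hf.continuous.norm.continuousOn
  rcases hw.eq_or_lt with hw | hw
  · exact le_csSup hbdd ⟨w, mem_sphere_zero_iff_norm.2 hw, rfl⟩
  have hR : R ≠ 0 := (pos_of_mem_ball (mem_ball_zero_iff.2 hw)).ne'
  refine Complex.norm_le_of_forall_mem_frontier_norm_le isBounded_ball hf.diffContOnCl
    (fun z hz ↦ le_csSup hbdd ⟨z, frontier_ball (0 : ℂ) hR ▸ hz, rfl⟩) ?_
  exact subset_closure (mem_ball_zero_iff.2 hw)

variable [CompleteSpace E]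

theorem DiffContOnCl.norm_rpow_le_circleAverage_poissonKernel_mul {c w : ℂ} {R : ℝ}
    (hf : DiffContOnCl ℂ f (ball c R)) (hw : w ∈ ball c R) (hp : 1 ≤ p) :
    ‖f w‖ ^ p ≤ Real.circleAverage (fun z ↦ poissonKernel c w z * ‖f z‖ ^ p) c R := by
  have hR : 0 < R := pos_of_mem_ball hw
  have hsphere : sphere c |R| ⊆ closure (ball c R) := by
    rw [abs_of_pos hR, closure_ball c hR.ne']
    exact sphere_subset_closedBall
  have hP := continuousOn_poissonKernel_sphere hw
  have hfn : ContinuousOn (fun z ↦ ‖f z‖) (sphere c |R|) := (hf.continuousOn.mono hsphere).norm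
  have hP_nonneg : ∀ z ∈ sphere c |R|, 0 ≤ poissonKernel c w z := fun z hz ↦ poissonKernel_nonneg
    (by rw [mem_sphere_iff_norm.1 hz, abs_of_pos hR]; exact (mem_ball_iff_norm.1 hw).le)
  calc ‖f w‖ ^ p = ‖Real.circleAverage (poissonKernel c w • f) c R‖ ^ p := by
        rw [hf.circleAverage_poissonKernel_smul hw]
    _ ≤ Real.circleAverage (fun z ↦ poissonKernel c w z * ‖f z‖) c R ^ p := by
        gcongr
        refine (norm_circleAverage_le_circleAverage_norm _ c R).trans_eq
          (circleAverage_congr_sphere fun z hz ↦ ?_)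
        simp [norm_smul, Real.norm_of_nonneg (hP_nonneg z hz)]
    _ ≤ Real.circleAverage (fun z ↦ poissonKernel c w z * ‖f z‖ ^ p) c R :=
        rpow_circleAverage_mul_le hp hP_nonneg (fun _ _ ↦ norm_nonneg _)
          (circleAverage_poissonKernel hw) hP.circleIntegrable' (hP.mul hfn).circleIntegrable'
          (hP.mul (hfn.rpow_const fun _ _ ↦ Or.inr (by linarith))).circleIntegrable'

theorem circleAverage_norm_rpow_mono (hf : Differentiable ℂ f) (hp : 1 ≤ p) {r R : ℝ}
    (hrR : |r| ≤ |R|) :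
    circleAverage (fun z ↦ ‖f z‖ ^ p) 0 r ≤ circleAverage (fun z ↦ ‖f z‖ ^ p) 0 R := by
  rcases hrR.eq_or_lt with hrR | hrR
  · rw [← circleAverage_abs_radius, hrR, circleAverage_abs_radius]
  have hg : Continuous fun z ↦ ‖f z‖ ^ p :=
    hf.continuous.norm.rpow_const fun _ ↦ Or.inr (by linarith)
  have hK : Continuous fun x : ℝ × ℝ ↦
      poissonKernel 0 (circleMap 0 r x.1) (circleMap 0 R x.2) * ‖f (circleMap 0 R x.2)‖ ^ p :=
    (continuous_poissonKernel_circleMap hrR).mul (hg.comp (by fun_prop))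
  calc circleAverage (fun w ↦ ‖f w‖ ^ p) 0 r
      ≤ circleAverage (fun w ↦ circleAverage (fun z ↦ poissonKernel 0 w z * ‖f z‖ ^ p) 0 R)
          0 r := by
        refine circleAverage_mono hg.continuousOn.circleIntegrable'
          (circleIntegrable_circleAverage hK) fun w hw ↦ ?_
        rw [← circleAverage_abs_radius (R := R)]
        exact hf.diffContOnCl.norm_rpow_le_circleAverage_poissonKernel_mul
          (mem_ball_zero_iff.2 (by rwa [mem_sphere_zero_iff_norm.1 hw])) hp
    _ = circleAverage (fun z ↦ circleAverage (fun w ↦ poissonKernel 0 w z * ‖f z‖ ^ p) 0 r)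
          0 R :=
        circleAverage_circleAverage_swap hK
    _ = circleAverage (fun z ↦ ‖f z‖ ^ p) 0 R := by
        refine circleAverage_congr_sphere fun z hz ↦ ?_
        simp_rw [mul_comm _ (‖f z‖ ^ p), ← smul_eq_mul, circleAverage_fun_smul,
          circleAverage_poissonKernel_left hrR hz, smul_eq_mul, mul_one]

end Holomorphic

theorem Mp_top_eq (f : ℂ → ℂ) (r : ℝ) : Mp ⊤ f r = sSup ((fun z ↦ ‖f z‖) '' sphere 0 |r|) := by
  have hIcc : circleMap 0 r '' Icc 0 (2 * π) = sphere 0 |r| :=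
    ((image_subset_range _ _).trans (range_circleMap 0 r).le).antisymm
      (image_circleMap_Ioc 0 r ▸ image_mono Ioc_subset_Icc_self)
  simp only [Mp, if_true, ← circleMap_zero]
  rw [← hIcc, image_image]

theorem Mp_eq_circleAverage {p : ℝ≥0∞} (hp : p ≠ ⊤) (f : ℂ → ℂ) (r : ℝ) :
    Mp p f r = circleAverage (fun z ↦ ‖f z‖ ^ p.toReal) 0 r ^ (1 / p.toReal) := by
  simp only [Mp, if_neg hp, circleAverage, circleMap_zero, smul_eq_mul, one_div]

theorem Mp_nonneg (p : ℝ≥0∞) (f : ℂ → ℂ) (r : ℝ) : 0 ≤ Mp p f r := by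
  by_cases hp : p = ⊤
  · rw [hp, Mp_top_eq]
    exact Real.sSup_nonneg (by rintro _ ⟨z, -, rfl⟩; positivity)
  · rw [Mp_eq_circleAverage hp]
    exact rpow_nonneg (circleAverage_nonneg_of_nonneg fun z _ ↦ by positivity) _

theorem Mp_mono {p : ℝ≥0∞} (hp : 1 ≤ p) {f : ℂ → ℂ} (hf : Differentiable ℂ f) {a b : ℝ}
    (hab : |a| ≤ |b|) : Mp p f a ≤ Mp p f b := by
  by_cases hp_top : p = ⊤
  · rw [hp_top, Mp_top_eq, Mp_top_eq]
    refine csSup_le ((NormedSpace.sphere_nonempty.2 (abs_nonneg a)).image _) ?_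
    rintro _ ⟨w, hw, rfl⟩
    exact hf.norm_le_sSup_norm_image_sphere ((mem_sphere_zero_iff_norm.1 hw).trans_le hab)
  have hp_real : 1 ≤ p.toReal := by
    simpa using ENNReal.toReal_mono hp_top hp
  rw [Mp_eq_circleAverage hp_top, Mp_eq_circleAverage hp_top]
  exact rpow_le_rpow (circleAverage_nonneg_of_nonneg fun z _ ↦ by positivity)
    (circleAverage_norm_rpow_mono hf hp_real hab) (by positivity)

theorem Mp_comp_div (p : ℝ≥0∞) (f : ℂ → ℂ) (t r : ℝ) :
    Mp p (fun z ↦ f (z / t)) r = Mp p f (r / t) := by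
  have h : ∀ θ : ℝ, ((r / t : ℝ) : ℂ) * exp (θ * I) = r * exp (θ * I) / t := fun θ ↦ by
    push_cast
    ring
  simp only [Mp, h]

theorem lintegral_Ioi_comp_div {c : ℝ} (hc : 0 < c) (g : ℝ → ℝ≥0∞) :
    ∫⁻ x in Ioi 0, g (x / c) = ENNReal.ofReal c * ∫⁻ x in Ioi 0, g x := by
  let e : ℝ ≃ᵐ ℝ := (Homeomorph.mulLeft₀ c⁻¹ (inv_ne_zero hc.ne')).toMeasurableEquiv
  have he : ∀ x, e x = x / c := fun x ↦ inv_mul_eq_div c x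
  have hpre : e ⁻¹' Ioi 0 = Ioi 0 := by
    ext x
    simp [he, div_pos_iff_of_pos_right hc]
  have hmap : Measure.map e volume = ENNReal.ofReal c • volume := by
    rw [show ⇑e = (c⁻¹ * ·) from rfl, Real.map_volume_mul_left (inv_ne_zero hc.ne'), inv_inv,
      abs_of_pos hc]
  calc ∫⁻ x in Ioi 0, g (x / c)
      = ∫⁻ y, g y ∂(Measure.map e (volume.restrict (Ioi 0))) := by
        simp only [lintegral_map_equiv, he]
    _ = ENNReal.ofReal c * ∫⁻ x in Ioi 0, g x := by
        rw [← hpre, ← Measure.restrict_map e.measurable measurableSet_Ioi, hmap, hpre,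
          Measure.restrict_smul, lintegral_smul_measure, smul_eq_mul]

theorem mixedNorm_mono {p : ℝ≥0∞} {q : ℝ} (hq : 0 ≤ q) (φ : ℝ → ℝ) {g h : ℂ → ℂ}
    (hgh : ∀ r > 0, Mp p g r ≤ Mp p h r) : mixedNorm p q φ g ≤ mixedNorm p q φ h := by
  refine ENNReal.rpow_le_rpow (setLIntegral_mono' measurableSet_Ioi fun r hr ↦ ?_) (by positivity)
  gcongr
  exacts [le_of_lt hr, Mp_nonneg p g r, hgh r hr]

theorem mixedNorm_comp_div (p : ℝ≥0∞) {q : ℝ} (hq : 0 ≤ q) (φ : ℝ → ℝ) (f : ℂ → ℂ) {δ : ℝ}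
    (hδ : 0 < δ) :
    mixedNorm p q (fun r ↦ φ (r / δ)) (fun z ↦ f (z / δ))
      = ENNReal.ofReal (δ ^ 2) ^ (1 / q) * mixedNorm p q φ f := by
  set V := fun r ↦ ENNReal.ofReal (Mp p f r ^ q * Real.exp (-q * φ r) * r)
  rw [mixedNorm, mixedNorm, ← ENNReal.mul_rpow_of_nonneg _ _ (by positivity)]
  congr 1
  calc ∫⁻ r in Ioi 0,
        ENNReal.ofReal (Mp p (fun z ↦ f (z / δ)) r ^ q * Real.exp (-q * φ (r / δ)) * r)
      = ∫⁻ r in Ioi 0, ENNReal.ofReal δ * V (r / δ) := by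
        refine lintegral_congr fun r ↦ ?_
        rw [Mp_comp_div, ← ENNReal.ofReal_mul hδ.le]
        congr 1
        field_simp
    _ = ENNReal.ofReal (δ ^ 2) * ∫⁻ r in Ioi 0, V r := by
        rw [lintegral_const_mul' _ _ ENNReal.ofReal_ne_top, lintegral_Ioi_comp_div hδ,
          ← mul_assoc, ← ENNReal.ofReal_mul hδ.le, sq]

theorem stmt15_general (p : ℝ≥0∞) (hp : 1 ≤ p) (q : ℝ) (hq : 1 ≤ q)
    (φ : ℝ → ℝ) (δ : ℝ) (hδ : 1 < δ) :
    ∃ C > (0:ℝ), ∀ t ≥ δ, ∀ f : ℂ → ℂ, Differentiable ℂ f →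
      mixedNorm p q (fun r => φ (r / δ)) (fun z => f (z / (t:ℂ))) ≤
        ENNReal.ofReal C * mixedNorm p q φ f := by
  have hδ₀ : 0 < δ := by linarith
  have hq₀ : 0 ≤ q := by linarith
  refine ⟨(δ ^ 2) ^ (1 / q), by positivity, fun t ht f hf ↦ ?_⟩
  calc mixedNorm p q (fun r ↦ φ (r / δ)) (fun z ↦ f (z / t))
      ≤ mixedNorm p q (fun r ↦ φ (r / δ)) (fun z ↦ f (z / δ)) := by
        refine mixedNorm_mono hq₀ _ fun r hr ↦ ?_
        rw [Mp_comp_div, Mp_comp_div]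
        exact Mp_mono hp hf (abs_le_abs_of_nonneg (div_nonneg hr.le (hδ₀.trans_le ht).le)
          (div_le_div_of_nonneg_left hr.le hδ₀ ht))
    _ = ENNReal.ofReal ((δ ^ 2) ^ (1 / q)) * mixedNorm p q φ f := by
        rw [mixedNorm_comp_div p hq₀ φ f hδ₀, ENNReal.ofReal_rpow_of_nonneg (by positivity)
          (by positivity)]

theorem stmt15 (p : ℝ≥0∞) (hp : 1 ≤ p) (q : ℝ) (hq : 1 ≤ q)
    (φ : ℝ → ℝ) (hφ : ContDiff ℝ 1 φ) (hφpos : ∀ r ≥ (0:ℝ), 0 < φ r)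
    (hφint : (∫⁻ r in Set.Ioi (0:ℝ), ENNReal.ofReal (Real.exp (-q * φ r) * r)) < ⊤)
    (hC : Tendsto (fun r => r * deriv φ r) atTop atTop)
    (δ : ℝ) (hδ : 1 < δ) :
    ∃ C > (0:ℝ), ∀ t ≥ δ, ∀ f : ℂ → ℂ, Differentiable ℂ f →
      mixedNorm p q (fun r => φ (r / δ)) (fun z => f (z / (t:ℂ))) ≤
        ENNReal.ofReal C * mixedNorm p q φ f :=
  stmt15_general p hp q hq φ δ hδ
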